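/- Let S be a nonempty independent set of vertices of a complex unit hypergraph, i.e., every edge is incident to at most one vertex of S. Then vol(S) / |S| ≤ λ_max(K), where vol(S) = ∑_{v ∈ S} deg(v) and λ_max(K) is the largest eigenvalue of the Kirchhoff Laplacian. -/

import Mathlib

open Matrix

/-- Degree of vertex `i`: the number of edges `k` with `ω i k ≠ 0`. -/
noncomputable def deg {n m : ℕ} (ω : Fin n → Fin m → ℂ) (i : Fin n) : ℕ :=
  Nat.card {k : Fin m // ω i k ≠ 0}

/-- Incidence matrix of a complex unit hypergraph. -/
noncomputable def incM {n m : ℕ} (ω : Fin n → Fin m → ℂ) : Matrix (Fin n) (Fin m) ℂ :=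
  Matrix.of ω

/-- Largest eigenvalue of a Hermitian matrix. -/
noncomputable def lamMax {N : ℕ} (hN : 0 < N) {M : Matrix (Fin N) (Fin N) ℂ}
    (h : M.IsHermitian) : ℝ :=
  Finset.univ.sup' (Finset.univ_nonempty_iff.mpr ⟨⟨0, hN⟩⟩) h.eigenvalues

/-!
Test the Rayleigh quotient of `K = B Bᴴ` against the indicator vector `x` of `S`: `⟨x, x⟩ = |S|`
and `⟨x, K x⟩ = ‖Bᴴ x‖² = ∑ₖ |∑_{i ∈ S} ω i k|²`. Independence leaves at most one nonzero term in
each inner sum, so no cross terms appear and `‖Bᴴ x‖² = ∑_{i ∈ S} ∑ₖ |ω i k|² = vol(S)`. The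
Rayleigh quotient of a Hermitian matrix is bounded by its largest eigenvalue.
-/

open scoped MatrixOrder ComplexOrder

lemma Matrix.IsHermitian.re_star_dotProduct_mulVec_le {ι 𝕜 : Type*} [Fintype ι] [DecidableEq ι]
    [RCLike 𝕜] {A : Matrix ι ι 𝕜} (hA : A.IsHermitian) {r : ℝ} (hr : ∀ i, hA.eigenvalues i ≤ r)
    (x : ι → 𝕜) : RCLike.re (star x ⬝ᵥ (A *ᵥ x)) ≤ r * RCLike.re (star x ⬝ᵥ x) := by
  have hle : A ≤ algebraMap ℝ (Matrix ι ι 𝕜) r := by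
    refine le_algebraMap_of_spectrum_le fun y hy => ?_
    rw [hA.spectrum_real_eq_range_eigenvalues] at hy
    obtain ⟨i, rfl⟩ := hy
    exact hr i
  have hnonneg := (RCLike.nonneg_iff.mp ((le_iff.mp hle).dotProduct_mulVec_nonneg x)).1
  simpa [sub_mulVec, dotProduct_sub, Algebra.algebraMap_eq_smul_one, smul_mulVec,
    dotProduct_smul, RCLike.smul_re] using hnonneg

lemma Matrix.star_dotProduct_mul_conjTranspose_mulVec {ι κ R : Type*} [Fintype ι] [Fintype κ]
    [CommSemiring R] [StarRing R] (B : Matrix ι κ R) (x : ι → R) :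
    star x ⬝ᵥ ((B * Bᴴ) *ᵥ x) = star (Bᴴ *ᵥ x) ⬝ᵥ (Bᴴ *ᵥ x) := by
  rw [← mulVec_mulVec, dotProduct_mulVec, star_mulVec, conjTranspose_conjTranspose]

lemma Complex.re_star_dotProduct_self {ι : Type*} [Fintype ι] (z : ι → ℂ) :
    (star z ⬝ᵥ z).re = ∑ i, normSq (z i) := by
  simp [dotProduct, Complex.normSq_apply, mul_comm]

lemma Complex.normSq_sum_eq_sum_normSq_of_unique_ne_zero {ι : Type*} {s : Finset ι} {f : ι → ℂ}
    (hf : ∀ i ∈ s, ∀ j ∈ s, f i ≠ 0 → f j ≠ 0 → i = j) :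
    normSq (∑ i ∈ s, f i) = ∑ i ∈ s, normSq (f i) := by
  by_cases hex : ∃ a ∈ s, f a ≠ 0
  · obtain ⟨a, ha, hfa⟩ := hex
    have hzero : ∀ i ∈ s, i ≠ a → f i = 0 := fun i hi hia =>
      by_contra fun hfi => hia (hf i hi a ha hfi hfa)
    rw [Finset.sum_eq_single_of_mem a ha hzero,
      Finset.sum_eq_single_of_mem a ha fun i hi hia => by simp [hzero i hi hia]]
  · push Not at hex
    rw [Finset.sum_eq_zero hex, Finset.sum_eq_zero fun i hi => by simp [hex i hi], map_zero]

lemma deg_eq_sum_normSq {n m : ℕ} {ω : Fin n → Fin m → ℂ} {i : Fin n}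
    (hω : ∀ k, ω i k = 0 ∨ ‖ω i k‖ = 1) : (deg ω i : ℝ) = ∑ k, Complex.normSq (ω i k) := by
  classical
  rw [deg, Nat.card_eq_fintype_card, Fintype.card_subtype, Finset.card_filter]
  push_cast
  refine Finset.sum_congr rfl fun k _ => ?_
  rcases hω k with h0 | h1
  · simp [h0]
  · have hne : ω i k ≠ 0 := by rintro h; simp [h] at h1
    simp [hne, Complex.normSq_eq_norm_sq, h1]

lemma conjTranspose_incM_mulVec_indicator {n m : ℕ} (ω : Fin n → Fin m → ℂ)
    (S : Finset (Fin n)) (k : Fin m) :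
    ((incM ω)ᴴ *ᵥ fun i => if i ∈ S then 1 else 0) k = ∑ i ∈ S, star (ω i k) := by
  simp [mulVec, dotProduct, incM, Finset.sum_ite_mem]

lemma re_star_dotProduct_indicator {ι : Type*} [Fintype ι] [DecidableEq ι] (S : Finset ι) :
    (star (fun i => if i ∈ S then (1 : ℂ) else 0) ⬝ᵥ fun i => if i ∈ S then 1 else 0).re
      = S.card := by
  simp [dotProduct, apply_ite, Finset.sum_ite_mem]

lemma re_star_dotProduct_kirchhoff_indicator {n m : ℕ} {ω : Fin n → Fin m → ℂ}
    (hω : ∀ i k, ω i k = 0 ∨ ‖ω i k‖ = 1) {S : Finset (Fin n)}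
    (hind : ∀ k : Fin m, Nat.card {i : Fin n // i ∈ S ∧ ω i k ≠ 0} ≤ 1) :
    (star (fun i => if i ∈ S then (1 : ℂ) else 0) ⬝ᵥ
        ((incM ω * (incM ω)ᴴ) *ᵥ fun i => if i ∈ S then 1 else 0)).re
      = ∑ i ∈ S, (deg ω i : ℝ) := by
  have hedge : ∀ k, Complex.normSq (∑ i ∈ S, star (ω i k)) = ∑ i ∈ S, Complex.normSq (ω i k) := by
    intro k
    have hsub := Finite.card_le_one_iff_subsingleton.mp (hind k)
    rw [Complex.normSq_sum_eq_sum_normSq_of_unique_ne_zero fun i hi j hj hfi hfj =>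
      congrArg Subtype.val (hsub.elim ⟨i, hi, by simpa using hfi⟩ ⟨j, hj, by simpa using hfj⟩)]
    simp [Complex.normSq_conj]
  rw [star_dotProduct_mul_conjTranspose_mulVec, Complex.re_star_dotProduct_self]
  simp only [conjTranspose_incM_mulVec_indicator, hedge, deg_eq_sum_normSq (hω _)]
  exact Finset.sum_comm

/-- If `S` is a nonempty independent set (every edge is incident to at most one vertex
of `S`), then `vol(S)/|S| ≤ λ_max(K)`. -/
theorem stmt18 (n m : ℕ) (ω : Fin n → Fin m → ℂ)
    (hω : ∀ i k, ω i k = 0 ∨ ‖ω i k‖ = 1)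
    (S : Finset (Fin n)) (hS : S.Nonempty)
    (hind : ∀ k : Fin m, Nat.card {i : Fin n // i ∈ S ∧ ω i k ≠ 0} ≤ 1) :
    (∑ i ∈ S, (deg ω i : ℝ)) / (S.card : ℝ) ≤
      lamMax (Fin.pos hS.choose)
        (Matrix.isHermitian_mul_conjTranspose_self (incM ω)) := by
  set hK := Matrix.isHermitian_mul_conjTranspose_self (incM ω)
  have hrayleigh := hK.re_star_dotProduct_mulVec_le (r := lamMax (Fin.pos hS.choose) hK)
    (fun i => Finset.le_sup' hK.eigenvalues (Finset.mem_univ i)) fun i => if i ∈ S then 1 else 0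
  rw [RCLike.re_to_complex, RCLike.re_to_complex, re_star_dotProduct_kirchhoff_indicator hω hind,
    re_star_dotProduct_indicator] at hrayleigh
  rwa [div_le_iff₀ (by exact_mod_cast hS.card_pos)]
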